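/- arXiv:1611.03078 — 4 statements merged into one kernel-verified Lean document; each statement's English description precedes it below -/
import Mathlib

section
/- In a basic pair satisfying B2, for a subset D of X the following are equivalent: (1) D = ext (Diamond D); (2) D = rest (Box D); (3) D is open and closed and Diamond D ⊆ Box D. -/
def bpExt {X S : Type*} (R : X → S → Prop) (U : Set S) : Set X := {x | ∃ a ∈ U, R x a}
def bpRest {X S : Type*} (R : X → S → Prop) (U : Set S) : Set X := {x | ∀ a, R x a → a ∈ U}
def bpBox {X S : Type*} (R : X → S → Prop) (D : Set X) : Set S := {a | ∀ x, R x a → x ∈ D}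
def bpDia {X S : Type*} (R : X → S → Prop) (D : Set X) : Set S := {a | ∃ x ∈ D, R x a}

theorem stmt11 {X S : Type*} (R : X → S → Prop) (hB2 : ∀ x : X, ∃ a : S, R x a)
    (D : Set X) :
    List.TFAE [D = bpExt R (bpDia R D),
               D = bpRest R (bpBox R D),
               D = bpExt R (bpBox R D) ∧ D = bpRest R (bpDia R D) ∧ bpDia R D ⊆ bpBox R D] := by
  tfae_have 1 → 2 := by
    intro h1
    ext x
    constructor
    · intro hx a hxa y hya
      rw [h1]
      exact ⟨a, ⟨x, hx, hxa⟩, hya⟩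
    · intro hx
      obtain ⟨a, hxa⟩ := hB2 x
      exact hx a hxa x hxa
  tfae_have 2 → 3 := by
    intro h2
    have hC : ∀ x a y, x ∈ D → R x a → R y a → y ∈ D := by
      intro x a y hx hxa hya
      rw [h2] at hx
      exact hx a hxa y hya
    refine ⟨?_, ?_, ?_⟩
    · ext x
      constructor
      · intro hx
        obtain ⟨a, hxa⟩ := hB2 x
        exact ⟨a, fun y hya => hC x a y hx hxa hya, hxa⟩
      · rintro ⟨a, ha, hxa⟩
        exact ha x hxa
    · ext x
      constructor
      · intro hx a hxa
        exact ⟨x, hx, hxa⟩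
      · intro hx
        obtain ⟨a, hxa⟩ := hB2 x
        obtain ⟨y, hy, hya⟩ := hx a hxa
        exact hC y a x hy hya hxa
    · rintro a ⟨x, hx, hxa⟩ y hya
      exact hC x a y hx hxa hya
  tfae_have 3 → 1 := by
    rintro ⟨-, -, hsub⟩
    ext x
    constructor
    · intro hx
      obtain ⟨a, hxa⟩ := hB2 x
      exact ⟨a, ⟨x, hx, hxa⟩, hxa⟩
    · rintro ⟨a, ha, hxa⟩
      exact hsub ha x hxa
  tfae_finish
end

section
/- Given basic pairs (X, ⊩₁, S) and (Y, ⊩₂, T) and a relation r from X to Y, for every b ∈ T we have (ρ(σ(r)))⁻ ext b ⊆ r⁻ ext b, where σ(r)(a,b) := ext a ⊆ r⁻ ext b and ρ(s)(x,y) := ◇y ⊆ s(◇x). -/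
def rinv {X Y : Type*} (r : X → Y → Prop) (E : Set Y) : Set X := {x | ∃ y ∈ E, r x y}
def sigmaRel {X Y S T : Type*} (R1 : X → S → Prop) (R2 : Y → T → Prop)
    (r : X → Y → Prop) (a : S) (b : T) : Prop := {x | R1 x a} ⊆ rinv r {y | R2 y b}
def rhoRel {X Y S T : Type*} (R1 : X → S → Prop) (R2 : Y → T → Prop)
    (s : S → T → Prop) (x : X) (y : Y) : Prop := ∀ b, R2 y b → ∃ a, R1 x a ∧ s a b

theorem stmt16 {X Y S T : Type*} (R1 : X → S → Prop) (R2 : Y → T → Prop)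
    (r : X → Y → Prop) (b : T) :
    rinv (rhoRel R1 R2 (sigmaRel R1 R2 r)) {y | R2 y b} ⊆ rinv r {y | R2 y b} := by
  rintro x ⟨y, hy, hrho⟩
  obtain ⟨a, hxa, hs⟩ := hrho b hy
  exact hs hxa
end

section
/- Given basic pairs (X, ⊩₁, S) and (Y, ⊩₂, T), a relation r from X to Y is continuous if and only if for all b ∈ T, r⁻ ext b = (ρ(σ(r)))⁻ ext b. -/
theorem stmt17 {X Y S T : Type*} (R1 : X → S → Prop) (R2 : Y → T → Prop)
    (r : X → Y → Prop) :
    (∀ b : T, ∀ x ∈ rinv r {y | R2 y b}, ∃ a : S, R1 x a ∧ {x' | R1 x' a} ⊆ rinv r {y | R2 y b}) ↔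
    (∀ b : T, rinv r {y | R2 y b} = rinv (rhoRel R1 R2 (sigmaRel R1 R2 r)) {y | R2 y b}) := by
  constructor
  · intro h b
    ext x
    constructor
    · rintro ⟨y, hy, hr⟩
      exact ⟨y, hy, fun b' hb' => (h b' x ⟨y, hb', hr⟩).imp fun a ⟨ha, hsub⟩ => ⟨ha, hsub⟩⟩
    · rintro ⟨y, hy, hrho⟩
      obtain ⟨a, ha, hs⟩ := hrho b hy
      exact hs ha
  · intro h b x hx
    rw [h b] at hx
    obtain ⟨y, hy, hrho⟩ := hx
    obtain ⟨a, ha, hs⟩ := hrho b hy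
    exact ⟨a, ha, hs⟩
end

section
/- Let (X, ⊩₁, S) and (Y, ⊩₂, T) be basic pairs with (Y, ⊩₂, T) Hausdorff, and let f be a function from X to Y (a total, single-valued relation). Then ρ(σ(f)) is single-valued and is a restriction of f: whenever ρ(σ(f))(x,y) holds, y = f(x). -/
theorem stmt19 {X Y S T : Type*} (R1 : X → S → Prop) (R2 : Y → T → Prop)
    (hT2 : ∀ y y' : Y, (∀ b b' : T, R2 y b → R2 y' b' →
      ∃ z, z ∈ {w | R2 w b} ∧ z ∈ {w | R2 w b'}) → y = y')
    (f : X → Y) :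
    (∀ x y, rhoRel R1 R2 (sigmaRel R1 R2 (fun x' y' => f x' = y')) x y → y = f x) ∧
    (∀ x y y', rhoRel R1 R2 (sigmaRel R1 R2 (fun x' y' => f x' = y')) x y →
      rhoRel R1 R2 (sigmaRel R1 R2 (fun x' y' => f x' = y')) x y' → y = y') := by
  have key : ∀ x y, rhoRel R1 R2 (sigmaRel R1 R2 (fun x' y' => f x' = y')) x y → y = f x := by
    intro x y h
    apply hT2
    intro b b' hb hb'
    obtain ⟨a, ha, hs⟩ := h b hb
    have hx : x ∈ rinv (fun x' y' => f x' = y') {y | R2 y b} := hs ha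
    obtain ⟨z, hz, hfz⟩ := hx
    refine ⟨f x, ?_, hb'⟩
    simpa [← hfz] using hz
  exact ⟨key, fun x y y' h h' => (key x y h).trans (key x y' h').symm⟩
end
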